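/- arXiv:1008.3316 — 5 statements merged into one kernel-verified Lean document; each statement's English description precedes it below -/
import Mathlib

section
/- For every positive integer n, the sum over k from 0 to n of (2n+1 choose n-k) * (2k+1) equals (2n+1) * (2n choose n). -/
lemma aux2 (n : ℕ) : ∀ m, m ≤ n →
    ∑ k ∈ Finset.range m, Nat.choose (2 * n + 1) (n - k) * (2 * k + 1)
      + (n + m + 1) * Nat.choose (2 * n + 1) (n - m)
      = (n + 1) * Nat.choose (2 * n + 1) n := by
  intro m
  induction m with
  | zero => simp
  | succ m ih =>
    intro hm
    have hm' : m ≤ n := Nat.le_of_succ_le hm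
    rw [Finset.sum_range_succ, ← ih hm']
    have habs : Nat.choose (2 * n + 1) (n - m - 1 + 1) * (n - m - 1 + 1)
        = Nat.choose (2 * n + 1) (n - m - 1) * (2 * n + 1 - (n - m - 1)) :=
      Nat.choose_succ_right_eq _ _
    have h1 : n - m - 1 + 1 = n - m := by omega
    have h2 : 2 * n + 1 - (n - m - 1) = n + m + 2 := by omega
    rw [h1, h2] at habs
    have h3 : n - (m + 1) = n - m - 1 := by omega
    rw [h3]
    -- goal: sum + (C(2n+1,n-m)*(2m+1) + (n+m+2)*C(2n+1,n-m-1)) = sum + (n+m+1)*C(2n+1,n-m)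
    have key : Nat.choose (2 * n + 1) (n - m) * (2 * m + 1)
        + (n + (m + 1) + 1) * Nat.choose (2 * n + 1) (n - m - 1)
        = (n + m + 1) * Nat.choose (2 * n + 1) (n - m) := by
      have : (n + m + 2) * Nat.choose (2 * n + 1) (n - m - 1)
          = (n - m) * Nat.choose (2 * n + 1) (n - m) := by
        rw [mul_comm] at habs ⊢
        omega
      have hnm : 2 * m + 1 + (n - m) = n + m + 1 := by omega
      calc Nat.choose (2 * n + 1) (n - m) * (2 * m + 1)
          + (n + (m + 1) + 1) * Nat.choose (2 * n + 1) (n - m - 1)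
          = Nat.choose (2 * n + 1) (n - m) * (2 * m + 1)
            + (n - m) * Nat.choose (2 * n + 1) (n - m) := by rw [← this]; ring_nf
        _ = (n + m + 1) * Nat.choose (2 * n + 1) (n - m) := by
            rw [mul_comm (n - m)]; rw [← Nat.mul_add, hnm, mul_comm]
    omega

theorem stmt_2 (n : ℕ) (hn : 0 < n) :
    ∑ k ∈ Finset.range (n + 1), Nat.choose (2 * n + 1) (n - k) * (2 * k + 1)
      = (2 * n + 1) * Nat.choose (2 * n) n := by
  have h := aux2 n n le_rfl
  rw [Finset.sum_range_succ]
  simp only [Nat.sub_self, Nat.choose_zero_right] at h ⊢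
  -- from h: sum + (2n+1)*1 = (n+1)*C(2n+1,n)
  have hend : ∑ k ∈ Finset.range n, Nat.choose (2 * n + 1) (n - k) * (2 * k + 1)
      + 1 * (2 * n + 1) = (n + 1) * Nat.choose (2 * n + 1) n := by omega
  rw [hend]
  -- (n+1)*C(2n+1,n) = (2n+1)*C(2n,n)
  have hs : Nat.choose (2 * n + 1) n = Nat.choose (2 * n + 1) (n + 1) :=
    (Nat.choose_symm_half n).symm
  rw [hs, mul_comm]
  exact (Nat.add_one_mul_choose_eq (2 * n) n).symm
end

section
/- For every positive integer n, the sum over k from 0 to n of (2n+1 choose n-k) * k * (k+1) * (2k+1) equals n * (2n+1) * (2n choose n). -/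
lemma aux_h1 (N j : ℕ) : (N + 1) * Nat.choose N j = (j + 1) * Nat.choose (N + 1) (j + 1) := by
  have := Nat.add_one_mul_choose_eq N j
  simpa [Nat.succ_eq_add_one, mul_comm] using this

lemma aux_h2 (N j : ℕ) :
    (N + 1) * Nat.choose N (j + 1) + (j + 1) * Nat.choose (N + 1) (j + 1)
      = (N + 1) * Nat.choose (N + 1) (j + 1) := by
  have hp : Nat.choose (N + 1) (j + 1) = Nat.choose N j + Nat.choose N (j + 1) :=
    Nat.choose_succ_succ N j
  have ha := aux_h1 N j
  zify at hp ha ⊢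
  linear_combination (-(N : ℤ) - 1) * hp - ha

lemma aux_tel (f g : ℕ → ℕ) (h : ∀ k, f k + g (k + 1) = g k) (K : ℕ) :
    (∑ k ∈ Finset.range K, f k) + g K = g 0 := by
  induction K with
  | zero => simp
  | succ K ih =>
    rw [Finset.sum_range_succ, add_assoc, h K]
    exact ih

lemma stageB (n : ℕ) (hn : 0 < n) :
    ∑ k ∈ Finset.range (n + 1), 2 * k * Nat.choose (2 * n) (n + k)
      = n * Nat.choose (2 * n) n := by
  obtain ⟨m, rfl⟩ : ∃ m, n = m + 1 := ⟨n - 1, by omega⟩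
  have key := aux_tel (fun k => 2 * k * Nat.choose (2 * (m + 1)) (m + 1 + k))
      (fun k => (2 * m + 2) * Nat.choose (2 * m + 1) (m + k))
      (by
        intro k
        have e : m + 1 + k = m + k + 1 := by omega
        have e2 : 2 * (m + 1) = 2 * m + 1 + 1 := by omega
        have e3 : m + (k + 1) = m + k + 1 := by omega
        rw [e, e2, e3]
        have h1 := aux_h1 (2 * m + 1) (m + k)
        have h2 := aux_h2 (2 * m + 1) (m + k)
        zify at h1 h2 ⊢
        linarith [h1, h2]) (m + 1 + 1)
  have hz : (2 * m + 2) * Nat.choose (2 * m + 1) (m + (m + 1 + 1)) = 0 := by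
    rw [Nat.choose_eq_zero_of_lt (by omega)]
    ring
  rw [hz, add_zero] at key
  rw [key]
  have h := aux_h1 (2 * m + 1) m
  have e2 : 2 * m + 1 + 1 = 2 * (m + 1) := by omega
  rw [e2] at h
  rw [show m + 0 = m from rfl, show 2 * m + 2 = 2 * (m + 1) from by ring]
  exact h

lemma stageA (n : ℕ) :
    ∑ k ∈ Finset.range (n + 1),
        k * (k + 1) * (2 * k + 1) * Nat.choose (2 * n + 1) (n + k + 1)
      = (2 * n + 1) * ∑ k ∈ Finset.range (n + 1), 2 * k * Nat.choose (2 * n) (n + k) := by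
  set a : ℕ → ℕ := fun k => (2 * n + 1) * (k * (k + 1)) with ha
  set b : ℕ → ℕ := fun k => Nat.choose (2 * n) (n + k) with hb
  have P1 : ∀ k, k * (k + 1) * (2 * k + 1) * Nat.choose (2 * n + 1) (n + k + 1)
      + a k * b (k + 1) = a k * b k := by
    intro k
    simp only [ha, hb]
    have e : n + (k + 1) = n + k + 1 := by omega
    rw [e]
    have h1 := aux_h1 (2 * n) (n + k)
    have h2 := aux_h2 (2 * n) (n + k)
    zify at h1 h2 ⊢
    linear_combination ((k : ℤ) * (k + 1)) * h2 - ((k : ℤ) * (k + 1)) * h1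
  have S1 : (∑ k ∈ Finset.range (n + 1),
        k * (k + 1) * (2 * k + 1) * Nat.choose (2 * n + 1) (n + k + 1))
      + (∑ k ∈ Finset.range (n + 1), a k * b (k + 1))
      = ∑ k ∈ Finset.range (n + 1), a k * b k := by
    rw [← Finset.sum_add_distrib]
    exact Finset.sum_congr rfl fun k _ => P1 k
  have S2 : (∑ k ∈ Finset.range (n + 1), a k * b k)
      = ∑ k ∈ Finset.range n, a (k + 1) * b (k + 1) := by
    rw [Finset.sum_range_succ']
    simp [ha]
  have S3 : (∑ k ∈ Finset.range (n + 1), a k * b (k + 1))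
      = ∑ k ∈ Finset.range n, a k * b (k + 1) := by
    rw [Finset.sum_range_succ]
    have : b (n + 1) = 0 := by
      simp only [hb]
      exact Nat.choose_eq_zero_of_lt (by omega)
    rw [this, mul_zero, add_zero]
  have S4 : (∑ k ∈ Finset.range n, a (k + 1) * b (k + 1))
      = (∑ k ∈ Finset.range n, a k * b (k + 1))
        + ∑ k ∈ Finset.range n, (2 * n + 1) * (2 * (k + 1)) * b (k + 1) := by
    rw [← Finset.sum_add_distrib]
    refine Finset.sum_congr rfl fun k _ => ?_
    simp only [ha]
    ring
  have main : (∑ k ∈ Finset.range (n + 1),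
        k * (k + 1) * (2 * k + 1) * Nat.choose (2 * n + 1) (n + k + 1))
      = ∑ k ∈ Finset.range n, (2 * n + 1) * (2 * (k + 1)) * b (k + 1) := by
    have := S1
    rw [S2, S3, S4] at this
    omega
  rw [main]
  have S5 : (∑ k ∈ Finset.range (n + 1), (2 * n + 1) * (2 * k) * b k)
      = ∑ k ∈ Finset.range n, (2 * n + 1) * (2 * (k + 1)) * b (k + 1) := by
    rw [Finset.sum_range_succ']
    simp
  rw [← S5, Finset.mul_sum]
  exact Finset.sum_congr rfl fun k _ => by simp only [hb]; ring

theorem stmt_4 (n : ℕ) (hn : 0 < n) :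
    ∑ k ∈ Finset.range (n + 1),
      Nat.choose (2 * n + 1) (n - k) * k * (k + 1) * (2 * k + 1)
      = n * (2 * n + 1) * Nat.choose (2 * n) n := by
  have sym : (∑ k ∈ Finset.range (n + 1),
        Nat.choose (2 * n + 1) (n - k) * k * (k + 1) * (2 * k + 1))
      = ∑ k ∈ Finset.range (n + 1),
        k * (k + 1) * (2 * k + 1) * Nat.choose (2 * n + 1) (n + k + 1) := by
    refine Finset.sum_congr rfl fun k hk => ?_
    have hk' : k ≤ n := by
      have := Finset.mem_range.mp hk; omega
    have e1 : n - k = (2 * n + 1) - (n + k + 1) := by omega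
    rw [e1, Nat.choose_symm (by omega : n + k + 1 ≤ 2 * n + 1)]
    ring
  rw [sym, stageA, stageB n hn]
  ring
end

section
/- For every positive integer n, the sum over k from 0 to n of (2n+1 choose n-k) * k^2 * (k+1)^2 * (2k+1) equals 2 * n^2 * (2n+1) * (2n choose n). -/
private def auxP (m k : ℕ) : ℕ :=
  k ^ 5 + (m + 2) * k ^ 4 + (2 * m + 1) * k ^ 3 + (2 * m + 1) * (m + 2) * k ^ 2
    + 2 * (m + 1) ^ 2 * k + 2 * (m + 1) ^ 2 * (m + 2)

private lemma aux_key (m k : ℕ) (hk : k ≤ m) :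
    Nat.choose (2 * (m + 1) + 1) (m + 1 - k) * auxP m k
      = Nat.choose (2 * (m + 1) + 1) (m + 1 - (k + 1)) * auxP m (k + 1)
        + Nat.choose (2 * (m + 1) + 1) (m + 1 - k) * (k ^ 2 * (k + 1) ^ 2 * (2 * k + 1)) := by
  obtain ⟨d, rfl⟩ : ∃ d, m = k + d := ⟨m - k, by omega⟩
  have h1 : k + d + 1 - k = d + 1 := by omega
  have h2 : k + d + 1 - (k + 1) = d := by omega
  rw [h1, h2]
  set M := 2 * (k + d + 1) + 1 with hM
  have hch : Nat.choose M (d + 1) * (d + 1) = Nat.choose M d * (2 * k + d + 3) := by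
    have := Nat.choose_succ_right_eq M d
    rw [this]; congr 1; omega
  apply Nat.eq_of_mul_eq_mul_right (Nat.succ_pos d)
  have hpoly : (d + 1) * ((2 * k + d + 3) * auxP (k + d) k)
      = (d + 1) * ((d + 1) * auxP (k + d) (k + 1)
          + (2 * k + d + 3) * (k ^ 2 * (k + 1) ^ 2 * (2 * k + 1))) := by
    simp only [auxP]; ring
  calc Nat.choose M (d + 1) * auxP (k + d) k * (d + 1)
      = Nat.choose M (d + 1) * (d + 1) * auxP (k + d) k := by ring
    _ = Nat.choose M d * ((2 * k + d + 3) * auxP (k + d) k) := by rw [hch]; ring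
    _ = Nat.choose M d * ((d + 1) * auxP (k + d) (k + 1))
        + Nat.choose M (d + 1) * (d + 1) * (k ^ 2 * (k + 1) ^ 2 * (2 * k + 1)) := by
        rw [hch]
        have := Nat.mul_left_cancel (Nat.succ_pos d) hpoly
        rw [this]; ring
    _ = (Nat.choose M d * auxP (k + d) (k + 1)
        + Nat.choose M (d + 1) * (k ^ 2 * (k + 1) ^ 2 * (2 * k + 1))) * (d + 1) := by ring

private lemma aux_tele (m : ℕ) : ∀ j, j ≤ m + 1 →
    Nat.choose (2 * (m + 1) + 1) (m + 1) * auxP m 0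
      = (∑ k ∈ Finset.range j,
          Nat.choose (2 * (m + 1) + 1) (m + 1 - k) * (k ^ 2 * (k + 1) ^ 2 * (2 * k + 1)))
        + Nat.choose (2 * (m + 1) + 1) (m + 1 - j) * auxP m j := by
  intro j
  induction j with
  | zero => simp
  | succ i ih =>
    intro hij
    have hi : i ≤ m := by omega
    rw [Finset.sum_range_succ]
    have := ih (by omega)
    rw [this, aux_key m i hi]
    ring

theorem stmt_5 (n : ℕ) (hn : 0 < n) :
    ∑ k ∈ Finset.range (n + 1),
      Nat.choose (2 * n + 1) (n - k) * k ^ 2 * (k + 1) ^ 2 * (2 * k + 1)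
      = 2 * n ^ 2 * (2 * n + 1) * Nat.choose (2 * n) n := by
  obtain ⟨m, rfl⟩ : ∃ m, n = m + 1 := ⟨n - 1, by omega⟩
  have htele := aux_tele m (m + 1) le_rfl
  have hlast : Nat.choose (2 * (m + 1) + 1) (m + 1 - (m + 1)) * auxP m (m + 1)
      = Nat.choose (2 * (m + 1) + 1) (m + 1 - (m + 1))
        * ((m + 1) ^ 2 * (m + 1 + 1) ^ 2 * (2 * (m + 1) + 1)) := by
    congr 1
    simp only [auxP]; ring
  have hsum : ∑ k ∈ Finset.range (m + 1 + 1),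
      Nat.choose (2 * (m + 1) + 1) (m + 1 - k) * k ^ 2 * (k + 1) ^ 2 * (2 * k + 1)
      = Nat.choose (2 * (m + 1) + 1) (m + 1) * auxP m 0 := by
    rw [Finset.sum_range_succ]
    have hre : ∀ k, Nat.choose (2 * (m + 1) + 1) (m + 1 - k) * k ^ 2 * (k + 1) ^ 2 * (2 * k + 1)
        = Nat.choose (2 * (m + 1) + 1) (m + 1 - k) * (k ^ 2 * (k + 1) ^ 2 * (2 * k + 1)) := by
      intro k; ring
    simp only [hre]
    rw [htele, hlast]
  rw [hsum]
  -- Now: choose (2(m+1)+1) (m+1) * auxP m 0 = 2 (m+1)^2 (2(m+1)+1) * choose (2(m+1)) (m+1)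
  have hc : (2 * (m + 1) + 1) * Nat.choose (2 * (m + 1)) (m + 1)
      = Nat.choose (2 * (m + 1) + 1) (m + 1) * (m + 2) := by
    have h1 := Nat.add_one_mul_choose_eq (2 * (m + 1)) (m + 1)
    have hsym : Nat.choose (2 * (m + 1) + 1) (m + 1 + 1)
        = Nat.choose (2 * (m + 1) + 1) (m + 1) := by
      rw [← Nat.choose_symm (by omega : m + 1 + 1 ≤ 2 * (m + 1) + 1)]
      congr 1; omega
    calc (2 * (m + 1) + 1) * Nat.choose (2 * (m + 1)) (m + 1)
        = Nat.succ (2 * (m + 1)) * Nat.choose (2 * (m + 1)) (m + 1) := by rw [Nat.succ_eq_add_one]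
      _ = Nat.choose (2 * (m + 1) + 1) (m + 1 + 1) * (m + 1 + 1) := by
          rw [h1]
      _ = Nat.choose (2 * (m + 1) + 1) (m + 1) * (m + 2) := by rw [hsym]
  have : auxP m 0 = 2 * (m + 1) ^ 2 * (m + 2) := by simp only [auxP]; ring
  rw [this]
  calc Nat.choose (2 * (m + 1) + 1) (m + 1) * (2 * (m + 1) ^ 2 * (m + 2))
      = 2 * (m + 1) ^ 2 * (Nat.choose (2 * (m + 1) + 1) (m + 1) * (m + 2)) := by ring
    _ = 2 * (m + 1) ^ 2 * ((2 * (m + 1) + 1) * Nat.choose (2 * (m + 1)) (m + 1)) := by rw [hc]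
    _ = 2 * (m + 1) ^ 2 * (2 * (m + 1) + 1) * Nat.choose (2 * (m + 1)) (m + 1) := by ring
end

section
/- Let P_r(n) = sum over k from 0 to n of (2n+1 choose n-k) * k^r * (k+1)^r * (2k+1). Then for every integer n >= 1 and every r >= 1, P_r(n) = n*(n+1)*P_{r-1}(n) - 2*n*(2n+1)*P_{r-1}(n-1). -/
def P (r n : ℕ) : ℤ :=
  ∑ k ∈ Finset.range (n + 1),
    (Nat.choose (2 * n + 1) (n - k) : ℤ) * k ^ r * (k + 1) ^ r * (2 * k + 1)

lemma key_nat (m k : ℕ) (hk : k ≤ m) :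
    (2*m+2) * (2*m+3) * Nat.choose (2*m+1) (m-k)
      = (m+1-k) * (m+k+2) * Nat.choose (2*m+3) (m+1-k) := by
  obtain ⟨j, hj⟩ : ∃ j, m = k + j := ⟨m - k, by omega⟩
  subst hj
  have e1 : k + j - k = j := by omega
  have e2 : k + j + 1 - k = j + 1 := by omega
  rw [e1, e2]
  have h1 := Nat.add_one_mul_choose_eq (2*(k+j)+1) j
  have h2 := Nat.choose_succ_right_eq (2*(k+j)+2) j
  have h3 := Nat.add_one_mul_choose_eq (2*(k+j)+2) j
  simp -failIfUnchanged only [Nat.succ_eq_add_one] at h1 h3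
  have e3 : 2*(k+j)+1+1 = 2*(k+j)+2 := by ring
  have e4 : 2*(k+j)+2+1 = 2*(k+j)+3 := by ring
  rw [e3] at h1
  rw [e4] at h3
  have e5 : 2*(k+j)+2 - j = k + (k+j) + 2 := by omega
  rw [e5] at h2
  calc (2*(k+j)+2) * (2*(k+j)+3) * Nat.choose (2*(k+j)+1) j
      = (2*(k+j)+3) * ((2*(k+j)+2) * Nat.choose (2*(k+j)+1) j) := by ring
    _ = (2*(k+j)+3) * (Nat.choose (2*(k+j)+2) (j+1) * (j+1)) := by rw [h1]
    _ = (2*(k+j)+3) * (Nat.choose (2*(k+j)+2) j * (k + (k+j) + 2)) := by rw [h2]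
    _ = ((2*(k+j)+3) * Nat.choose (2*(k+j)+2) j) * (k + (k+j) + 2) := by ring
    _ = (Nat.choose (2*(k+j)+3) (j+1) * (j+1)) * (k + (k+j) + 2) := by rw [h3]
    _ = (j + 1) * (k + j + k + 2) * Nat.choose (2*(k+j)+3) (j+1) := by ring

theorem stmt_6 (n r : ℕ) (hn : 1 ≤ n) (hr : 1 ≤ r) :
    P r n = n * (n + 1) * P (r - 1) n - 2 * n * (2 * n + 1) * P (r - 1) (n - 1) := by
  obtain ⟨m, rfl⟩ : ∃ m, n = m + 1 := ⟨n - 1, by omega⟩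
  obtain ⟨s, rfl⟩ : ∃ s, r = s + 1 := ⟨r - 1, by omega⟩
  simp only [P, Nat.add_sub_cancel]
  have h1 : (∑ k ∈ Finset.range (m+1),
        (Nat.choose (2*(m+1)+1) (m+1-k) : ℤ) * k^(s+1) * (k+1)^(s+1) * (2*k+1))
      = (((m:ℤ)+1) * ((m:ℤ)+2)) * (∑ k ∈ Finset.range (m+1),
          (Nat.choose (2*(m+1)+1) (m+1-k) : ℤ) * k^s * (k+1)^s * (2*k+1))
        - (2*((m:ℤ)+1) * (2*(m:ℤ)+3)) * (∑ k ∈ Finset.range (m+1),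
          (Nat.choose (2*m+1) (m-k) : ℤ) * k^s * (k+1)^s * (2*k+1)) := by
    rw [Finset.mul_sum, Finset.mul_sum, ← Finset.sum_sub_distrib]
    refine Finset.sum_congr rfl ?_
    intro k hk
    rw [Finset.mem_range] at hk
    have hk' : k ≤ m := by omega
    have hkey := key_nat m k hk'
    have hkeyZ : ((2*m+2 : ℕ) : ℤ) * ((2*m+3 : ℕ) : ℤ) * (Nat.choose (2*m+1) (m-k) : ℤ)
        = ((m+1-k : ℕ) : ℤ) * ((m+k+2 : ℕ) : ℤ) * (Nat.choose (2*m+3) (m+1-k) : ℤ) := by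
      exact_mod_cast congrArg (Nat.cast : ℕ → ℤ) hkey
    have hc1 : ((m+1-k : ℕ) : ℤ) = (m : ℤ) + 1 - k := by
      have : m + 1 - k = (m - k) + 1 := by omega
      rw [this]
      push_cast [Nat.cast_sub hk']
      ring
    rw [hc1] at hkeyZ
    push_cast at hkeyZ
    have hc3 : 2*(m+1)+1 = 2*m+3 := by ring
    rw [hc3]
    linear_combination ((k:ℤ)^s * ((k:ℤ)+1)^s * (2*(k:ℤ)+1)) * hkeyZ
  rw [Finset.sum_range_succ, Finset.sum_range_succ (n := m+1), h1]
  push_cast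
  ring
end

section
/- For all positive integers n and all natural numbers r, the sum over k from 0 to n of (2n+1 choose n-k) * k^r * (k+1)^r * (2k+1) is divisible by (2n+1) * (2n choose n) * n^min(2,r). -/
open Finset

/-- column of central binomial coefficients, zero beyond the edge -/
def cc (n k : ℕ) : ℤ := if k ≤ n then ((2*n).choose (n-k) : ℤ) else 0

/-- `Q m k = ∏_{i=1}^m (k+i)(k+1-i)`, i.e. the Newton basis polynomial
`∏_{i=1}^m (k(k+1) - (i-1)i)` -/
def Q (m : ℕ) (k : ℤ) : ℤ := ∏ i ∈ Finset.range m, ((k + i + 1) * (k - i))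

/-- `U n m = m! * n(n-1)⋯(n-m+1)` -/
def U (n m : ℕ) : ℤ := (m.factorial : ℤ) * ∏ i ∈ Finset.range m, ((n:ℤ) - i)

/-- Newton expansion coefficients of `x^r` w.r.t. nodes `0, 2, 6, …, i(i+1), …` -/
def a : ℕ → ℕ → ℤ
  | 0, 0 => 1
  | 0, _+1 => 0
  | _+1, 0 => 0
  | r+1, m+1 => a r m + ((m:ℤ)+1)*((m:ℤ)+2) * a r (m+1)

lemma a_eq_zero : ∀ r m : ℕ, r < m → a r m = 0 := by
  intro r
  induction r with
  | zero => intro m h; match m, h with | m+1, _ => rfl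
  | succ r ih =>
    intro m h
    match m, h with
    | m+1, h =>
      show a r m + ((m:ℤ)+1)*((m:ℤ)+2) * a r (m+1) = 0
      rw [ih m (by omega), ih (m+1) (by omega)]; ring

lemma Q_succ (m : ℕ) (k : ℤ) : Q (m+1) k = Q m k * ((k + m + 1) * (k - m)) :=
  Finset.prod_range_succ _ _

lemma Q_shift (m : ℕ) (k : ℤ) : Q m (k+1) * (k + 1 - m) = Q m k * (k + 1 + m) := by
  induction m with
  | zero => simp [Q]
  | succ m ih =>
    rw [Q_succ, Q_succ]
    push_cast
    linear_combination ((k + m + 2) * (k - m)) * ih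

lemma expand (r : ℕ) (k : ℤ) :
    (k*(k+1))^r = ∑ m ∈ Finset.range (r+1), a r m * Q m k := by
  induction r with
  | zero => simp [Q, a]
  | succ r ih =>
    have step : ∀ m : ℕ, (k*(k+1)) * Q m k = Q (m+1) k + ((m:ℤ)*((m:ℤ)+1)) * Q m k := by
      intro m; rw [Q_succ]; ring
    rw [pow_succ, ih, Finset.sum_mul]
    have h1 : ∀ m ∈ Finset.range (r+1),
        a r m * Q m k * (k*(k+1)) = a r m * Q (m+1) k + ((m:ℤ)*((m:ℤ)+1)) * a r m * Q m k := by
      intro m _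
      have := step m
      linear_combination (a r m) * this
    rw [Finset.sum_congr rfl h1, Finset.sum_add_distrib]
    -- RHS: expand target
    rw [Finset.sum_range_succ' (fun m => a (r+1) m * Q m k) (r+1)]
    have ha0 : a (r+1) 0 = 0 := rfl
    rw [ha0]
    have h2 : ∀ m ∈ Finset.range (r+1),
        a (r+1) (m+1) * Q (m+1) k
          = a r m * Q (m+1) k + (((m:ℤ)+1)*((m:ℤ)+2) * a r (m+1)) * Q (m+1) k := by
      intro m _
      show (a r m + ((m:ℤ)+1)*((m:ℤ)+2) * a r (m+1)) * Q (m+1) k = _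
      ring
    rw [Finset.sum_congr rfl h2, Finset.sum_add_distrib]
    have h3 : ∑ m ∈ Finset.range (r+1), (((m:ℤ)+1)*((m:ℤ)+2) * a r (m+1)) * Q (m+1) k
        = ∑ m ∈ Finset.range (r+1), ((m:ℤ)*((m:ℤ)+1)) * a r m * Q m k := by
      rw [Finset.sum_range_succ' (fun m => ((m:ℤ)*((m:ℤ)+1)) * a r m * Q m k) r]
      rw [Finset.sum_range_succ (fun m => (((m:ℤ)+1)*((m:ℤ)+2) * a r (m+1)) * Q (m+1) k) r]
      rw [a_eq_zero r (r+1) (by omega)]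
      push_cast
      simp only [mul_zero, zero_mul, add_zero, zero_add]
      exact Finset.sum_congr rfl fun x _ => by ring
    rw [h3]; ring

lemma cc_rec (n k : ℕ) : cc n k * ((n:ℤ) - k) = cc n (k+1) * ((n:ℤ) + k + 1) := by
  rcases lt_trichotomy k n with h | h | h
  · have hk1 : k + 1 ≤ n := h
    simp only [cc, if_pos h.le, if_pos hk1]
    have hnat : (2*n).choose (n-k) * (n-k) = (2*n).choose (n-k-1) * (n+k+1) := by
      have h1 : n - k = (n - k - 1) + 1 := by omega
      have h2 : 2*n - (n-k-1) = n + k + 1 := by omega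
      calc (2*n).choose (n-k) * (n-k) = (2*n).choose ((n-k-1)+1) * ((n-k-1)+1) := by rw [← h1]
        _ = (2*n).choose (n-k-1) * (2*n - (n-k-1)) := Nat.choose_succ_right_eq _ _
        _ = (2*n).choose (n-k-1) * (n+k+1) := by rw [h2]
    have hc : ((n:ℤ) - k) = ((n - k : ℕ) : ℤ) := by
      rw [Nat.cast_sub h.le]
    have hc2 : n - (k+1) = n - k - 1 := by omega
    rw [hc, hc2]
    exact_mod_cast congrArg (fun x : ℕ => (x : ℤ)) hnat
  · subst h
    simp [cc, sub_self]
  · have h1 : ¬ (k ≤ n) := by omega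
    have h2 : ¬ (k + 1 ≤ n) := by omega
    simp only [cc, if_neg h1, if_neg h2, zero_mul]

lemma U_succ (n m : ℕ) : U n (m+1) = ((m:ℤ)+1) * ((n:ℤ) - m) * U n m := by
  simp only [U, Finset.prod_range_succ, Nat.factorial_succ]
  push_cast
  ring

lemma keyV (n m : ℕ) :
    ∑ k ∈ Finset.range (n+1), (cc n k - cc n (k+1)) * Q m (k:ℤ)
      = ((2*n).choose n : ℤ) * U n m := by
  induction m with
  | zero =>
    have : ∀ k ∈ Finset.range (n+1), (cc n k - cc n (k+1)) * Q 0 (k:ℤ) = cc n k - cc n (k+1) := by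
      intro k _; simp [Q]
    rw [Finset.sum_congr rfl this, Finset.sum_range_sub' (fun k => cc n k)]
    have h1 : cc n 0 = ((2*n).choose n : ℤ) := by simp [cc]
    have h2 : cc n (n+1) = 0 := by simp [cc]
    rw [h1, h2, sub_zero]
    simp [U]
  | succ m ih =>
    set G : ℕ → ℤ := fun k => cc n k * Q m (k:ℤ) * ((k:ℤ) * ((k:ℤ) - m)) with hG
    have point : ∀ k : ℕ,
        (cc n k - cc n (k+1)) * Q (m+1) (k:ℤ)
          = (G k - G (k+1)) + ((m:ℤ)+1)*((n:ℤ) - m) * ((cc n k - cc n (k+1)) * Q m (k:ℤ)) := by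
      intro k
      have h1 := cc_rec n k
      have h2 := Q_shift m (k:ℤ)
      simp only [hG]
      rw [Q_succ]
      push_cast
      linear_combination (-(((m:ℤ)+1)) * Q m (k:ℤ)) * h1 + ((((k:ℤ))+1) * cc n (k+1)) * h2
    calc ∑ k ∈ Finset.range (n+1), (cc n k - cc n (k+1)) * Q (m+1) (k:ℤ)
        = ∑ k ∈ Finset.range (n+1),
            ((G k - G (k+1)) + ((m:ℤ)+1)*((n:ℤ) - m) * ((cc n k - cc n (k+1)) * Q m (k:ℤ))) :=
          Finset.sum_congr rfl fun k _ => point k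
      _ = (G 0 - G (n+1)) + ((m:ℤ)+1)*((n:ℤ) - m) * ∑ k ∈ Finset.range (n+1),
            ((cc n k - cc n (k+1)) * Q m (k:ℤ)) := by
          rw [Finset.sum_add_distrib, Finset.sum_range_sub' G, Finset.mul_sum]
      _ = ((2*n).choose n : ℤ) * U n (m+1) := by
          have hG0 : G 0 = 0 := by simp [hG]
          have hGn : G (n+1) = 0 := by
            have : cc n (n+1) = 0 := by simp [cc]
            simp [hG, this]
          rw [hG0, hGn, ih, U_succ]
          ring

lemma L3 (n k : ℕ) (hk : k ≤ n) :
    ((2*n+1).choose (n-k) : ℤ) * (2*(k:ℤ)+1) = (2*(n:ℤ)+1) * (cc n k - cc n (k+1)) := by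
  rcases eq_or_lt_of_le hk with h | h
  · subst h
    have h1 : ¬ (k + 1 ≤ k) := by omega
    simp [cc, if_neg h1]
  · have e1 : cc n k = ((2*n).choose (n-k) : ℤ) := if_pos hk
    have e2 : cc n (k+1) = ((2*n).choose (n-k-1) : ℤ) := by
      have : n - (k+1) = n - k - 1 := by omega
      simp only [cc, if_pos (show k+1 ≤ n from h), this]
    have h1 : n - k = (n-k-1)+1 := by omega
    have pascal : (2*n+1).choose (n-k) = (2*n).choose (n-k-1) + (2*n).choose (n-k) := by
      calc (2*n+1).choose (n-k) = (2*n+1).choose ((n-k-1)+1) := by rw [← h1]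
        _ = (2*n).choose (n-k-1) + (2*n).choose ((n-k-1)+1) := Nat.choose_succ_succ _ _
        _ = (2*n).choose (n-k-1) + (2*n).choose (n-k) := by rw [← h1]
    have absorb : (2*n+1) * (2*n).choose (n-k-1) = (2*n+1).choose (n-k) * (n-k) := by
      have h2 := Nat.add_one_mul_choose_eq (2*n) (n-k-1)
      calc (2*n+1) * (2*n).choose (n-k-1) = Nat.succ (2*n) * (2*n).choose (n-k-1) := by rfl
        _ = (2*n+1).choose ((n-k-1)+1) * ((n-k-1)+1) := h2
        _ = (2*n+1).choose (n-k) * (n-k) := by rw [← h1]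
    have hcast : ((n - k : ℕ) : ℤ) = (n:ℤ) - k := Nat.cast_sub hk
    have p' : ((2*n+1).choose (n-k) : ℤ) = ((2*n).choose (n-k-1) : ℤ) + ((2*n).choose (n-k) : ℤ) := by
      exact_mod_cast congrArg (fun x : ℕ => (x:ℤ)) pascal
    have a' : (2*(n:ℤ)+1) * ((2*n).choose (n-k-1) : ℤ)
        = ((2*n+1).choose (n-k) : ℤ) * ((n:ℤ) - (k:ℤ)) := by
      rw [← hcast]
      exact_mod_cast congrArg (fun x : ℕ => (x:ℤ)) absorb
    rw [e1, e2]
    linear_combination (2*(n:ℤ)+1) * p' + 2 * a'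

def b (j : ℕ) : ℤ := (-1)^j * ((j+1).factorial : ℤ) * (j.factorial : ℤ)

lemma b_succ (j : ℕ) : b (j+1) = -(((j:ℤ)+1)*((j:ℤ)+2)) * b j := by
  simp only [b, Nat.factorial_succ, pow_succ]
  push_cast
  ring

lemma sigma (r : ℕ) : ∑ j ∈ Finset.range (r+1), a (r+1) (j+1) * b j = a r 0 := by
  have pt : ∀ j : ℕ, a (r+1) (j+1) * b j = a r j * b j - a r (j+1) * b (j+1) := by
    intro j
    show (a r j + ((j:ℤ)+1)*((j:ℤ)+2) * a r (j+1)) * b j = _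
    rw [b_succ]; ring
  rw [Finset.sum_congr rfl (fun j _ => pt j), Finset.sum_range_sub' (fun j => a r j * b j)]
  rw [a_eq_zero r (r+1) (by omega)]
  simp [b]

lemma dvdP (n : ℕ) : ∀ j : ℕ,
    (n:ℤ) ∣ (∏ i ∈ Finset.range j, ((n:ℤ) - 1 - i)) - (-1)^j * (j.factorial : ℤ) := by
  intro j
  induction j with
  | zero => simp
  | succ j ih =>
    obtain ⟨t, ht⟩ := ih
    refine ⟨((n:ℤ)-1-j)*t + (-1)^j * (j.factorial : ℤ), ?_⟩
    rw [Finset.prod_range_succ, Nat.factorial_succ]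
    push_cast
    linear_combination ((n:ℤ)-1-(j:ℤ)) * ht

lemma U_shape (n j : ℕ) :
    U n (j+1) = ((j+1).factorial : ℤ) * ((∏ i ∈ Finset.range j, ((n:ℤ)-1-i)) * n) := by
  rw [U, Finset.prod_range_succ']
  have h : ∀ i ∈ Finset.range j, (n:ℤ) - (↑(i+1)) = (n:ℤ) - 1 - i := by
    intro i _; push_cast; ring
  rw [Finset.prod_congr rfl h]
  push_cast
  ring

theorem stmt_7 (n r : ℕ) (hn : 0 < n) :
    ((2 * n + 1) * Nat.choose (2 * n) n * n ^ min 2 r : ℤ) ∣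
      ∑ k ∈ Finset.range (n + 1),
        (Nat.choose (2 * n + 1) (n - k) : ℤ) * k ^ r * (k + 1) ^ r * (2 * k + 1) := by
  classical
  set C : ℤ := ((2*n).choose n : ℤ) with hC
  set W : ℤ := ∑ m ∈ Finset.range (r+1), a r m * U n m with hWdef
  have hS : (∑ k ∈ Finset.range (n + 1),
        (Nat.choose (2 * n + 1) (n - k) : ℤ) * k ^ r * (k + 1) ^ r * (2 * k + 1))
      = (2*(n:ℤ)+1) * (C * W) := by
    have h1 : ∀ k ∈ Finset.range (n+1),
        ((2*n+1).choose (n-k) : ℤ) * (k:ℤ)^r * ((k:ℤ)+1)^r * (2*(k:ℤ)+1)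
        = (2*(n:ℤ)+1) * ((cc n k - cc n (k+1)) * ((k:ℤ)*((k:ℤ)+1))^r) := by
      intro k hk
      have hk' : k ≤ n := Nat.lt_succ_iff.mp (Finset.mem_range.mp hk)
      have h := L3 n k hk'
      rw [show ((k:ℤ)*((k:ℤ)+1))^r = (k:ℤ)^r * ((k:ℤ)+1)^r from mul_pow _ _ _]
      linear_combination ((k:ℤ)^r * ((k:ℤ)+1)^r) * h
    rw [Finset.sum_congr rfl h1, ← Finset.mul_sum]
    congr 1
    have h2 : ∀ k ∈ Finset.range (n+1),
        (cc n k - cc n (k+1)) * ((k:ℤ)*((k:ℤ)+1))^r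
        = ∑ m ∈ Finset.range (r+1), a r m * ((cc n k - cc n (k+1)) * Q m (k:ℤ)) := by
      intro k _
      rw [expand r (k:ℤ), Finset.mul_sum]
      exact Finset.sum_congr rfl fun m _ => by ring
    rw [Finset.sum_congr rfl h2, Finset.sum_comm, hWdef, Finset.mul_sum]
    refine Finset.sum_congr rfl fun m _ => ?_
    rw [← Finset.mul_sum, keyV n m, hC]
    ring
  have hdvd : ((n:ℤ))^(min 2 r) ∣ W := by
    match r with
    | 0 =>
      rw [show min 2 0 = 0 from rfl, pow_zero]
      exact one_dvd W
    | (s+1) =>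
      -- W = n * X
      set X : ℤ := ∑ j ∈ Finset.range (s+1),
          a (s+1) (j+1) * ((j+1).factorial : ℤ) * ∏ i ∈ Finset.range j, ((n:ℤ)-1-i) with hX
      have ha0 : a (s+1) 0 = 0 := rfl
      have hWn : W = (n:ℤ) * X := by
        rw [hWdef, Finset.sum_range_succ' (fun m => a (s+1) m * U n m) (s+1), ha0]
        have h3 : ∀ j ∈ Finset.range (s+1),
            a (s+1) (j+1) * U n (j+1)
            = (n:ℤ) * (a (s+1) (j+1) * ((j+1).factorial : ℤ) * ∏ i ∈ Finset.range j, ((n:ℤ)-1-i)) := by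
          intro j _
          rw [U_shape]
          ring
        rw [Finset.sum_congr rfl h3, ← Finset.mul_sum, hX]
        ring
      match s with
      | 0 =>
        rw [show min 2 1 = 1 from rfl, pow_one]
        exact ⟨X, hWn⟩
      | (t+1) =>
        have hmin : min 2 (t+2) = 2 := by omega
        rw [hmin]
        have hsig : ∑ j ∈ Finset.range (t+2), a (t+2) (j+1) * b j = 0 := by
          rw [sigma (t+1)]; rfl
        have hXsplit : X = (∑ j ∈ Finset.range (t+2),
            a (t+2) (j+1) * ((j+1).factorial : ℤ)
              * ((∏ i ∈ Finset.range j, ((n:ℤ)-1-i)) - (-1)^j * (j.factorial : ℤ)))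
            + ∑ j ∈ Finset.range (t+2), a (t+2) (j+1) * b j := by
          rw [hX, ← Finset.sum_add_distrib]
          refine Finset.sum_congr rfl fun j _ => ?_
          simp only [b]
          ring
        have hnX : (n:ℤ) ∣ X := by
          rw [hXsplit, hsig, add_zero]
          refine Finset.dvd_sum fun j _ => ?_
          exact Dvd.dvd.mul_left (dvdP n j) _
        obtain ⟨X', hX'⟩ := hnX
        exact ⟨X', by rw [hWn, hX']; ring⟩
  obtain ⟨Y, hY⟩ := hdvd
  refine ⟨Y, ?_⟩
  rw [hS, hY]
  push_cast
  ring
end
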